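/- With Σ symmetric positive definite, Q = Σ^{-1} - (Σ^{-1} 1 1^T Σ^{-1})/(1^T Σ^{-1} 1), L a full-rank k×p matrix with L Q L^T invertible, P = Q L^T (L Q L^T)^{-1/2}, and A = Q - P P^T, one has 1^T A = 0 and P^T Σ A = 0. In particular, the matrix with rows 1^T Σ^{-1} and P^T, multiplied by Σ A, equals the zero matrix. -/

import Mathlib

open Matrix

lemma vecMul_vecMulVec' {p q : ℕ} (c : ℝ) (o u : Fin p → ℝ) (v : Fin q → ℝ) :
    (c • vecMulVec u v).vecMul o = (c * dotProduct o u) • v := by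
  ext j
  simp [vecMul, vecMulVec, dotProduct, Finset.sum_mul, Finset.mul_sum]
  ring_nf
  apply Finset.sum_congr rfl
  intro i _
  ring

lemma vecMulVec_mul' {p q : ℕ} (u : Fin p → ℝ) (v : Fin q → ℝ)
    (M : Matrix (Fin q) (Fin p) ℝ) :
    vecMulVec u v * M = vecMulVec u (v ᵥ* M) := by
  ext i j
  simp [vecMulVec, mul_apply, vecMul, dotProduct, Finset.mul_sum, mul_assoc]

/-- With `P = QLᵀ(LQLᵀ)^{-1/2}` and `A = Q - PPᵀ = Q - QLᵀ(LQLᵀ)⁻¹LQ`, one has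
`1ᵀ A = 0` and `Pᵀ Σ A = 0`. -/
theorem stmt_8 (p k : ℕ) (S : Matrix (Fin p) (Fin p) ℝ) (hS : S.PosDef)
    (o : Fin p → ℝ) (ho : o = fun _ => 1)
    (Q : Matrix (Fin p) (Fin p) ℝ)
    (hQ : Q = S⁻¹ -
      (dotProduct o (S⁻¹.mulVec o))⁻¹ • vecMulVec (S⁻¹.mulVec o) (S⁻¹.vecMul o))
    (L : Matrix (Fin k) (Fin p) ℝ) (hLQL : IsUnit (L * Q * Lᵀ))
    (R : Matrix (Fin k) (Fin k) ℝ) (hRsymm : Rᵀ = R)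
    (hRR : R * R = (L * Q * Lᵀ)⁻¹)
    (P : Matrix (Fin p) (Fin k) ℝ) (hP : P = Q * Lᵀ * R)
    (A : Matrix (Fin p) (Fin p) ℝ)
    (hA : A = Q - Q * Lᵀ * (L * Q * Lᵀ)⁻¹ * L * Q) :
    A.vecMul o = 0 ∧ Pᵀ * S * A = 0 := by
  have hSdet : IsUnit S.det := isUnit_iff_ne_zero.mpr hS.det_pos.ne'
  set u : Fin p → ℝ := S⁻¹.mulVec o with hu
  set v : Fin p → ℝ := S⁻¹.vecMul o with hv
  set c : ℝ := (dotProduct o u)⁻¹ with hc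
  -- S⁻¹ is symmetric, so u = v
  have hSinvT : S⁻¹ᵀ = S⁻¹ := by
    have hST : Sᵀ = S := by
      have := hS.isHermitian.eq
      rw [← Matrix.conjTranspose_eq_transpose_of_trivial]; exact this
    rw [Matrix.transpose_nonsing_inv, hST]
  have hvu : v = u := by
    rw [hv, hu, ← hSinvT, Matrix.mulVec_transpose, hSinvT]
  -- o ᵥ* Q = 0
  have hoQ : Q.vecMul o = 0 := by
    funext j
    have hp : 0 < p := j.pos
    have ho0 : o ≠ 0 := by
      rw [ho]
      intro h
      have := congrFun h ⟨0, hp⟩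
      simp at this
    have hpos : 0 < dotProduct o u := by
      have := (hS.inv).dotProduct_mulVec_pos ho0
      simpa [hu] using this
    have hne : dotProduct o u ≠ 0 := ne_of_gt hpos
    rw [hQ, Matrix.vecMul_sub, vecMul_vecMulVec', hc, inv_mul_cancel₀ hne, one_smul]
    simp [hv, Matrix.vecMul]
  -- Q * S * Q = Q
  have hvS : v ᵥ* S = o := by
    rw [hv, Matrix.vecMul_vecMul, Matrix.nonsing_inv_mul S hSdet, Matrix.vecMul_one]
  have hQS : Q * S = 1 - c • vecMulVec u o := by
    rw [hQ, Matrix.sub_mul, Matrix.smul_mul, vecMulVec_mul', hvS,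
      Matrix.nonsing_inv_mul S hSdet]
  have hQSQ : Q * S * Q = Q := by
    rw [hQS, Matrix.sub_mul, Matrix.one_mul, Matrix.smul_mul, vecMulVec_mul', hoQ]
    have : vecMulVec u (0 : Fin p → ℝ) = 0 := by ext i j; simp [vecMulVec]
    rw [this, smul_zero, sub_zero]
  -- L * A = 0
  have hLQLdet : IsUnit (L * Q * Lᵀ).det := (Matrix.isUnit_iff_isUnit_det _).mp hLQL
  have hinv : L * Q * Lᵀ * (L * Q * Lᵀ)⁻¹ = 1 := Matrix.mul_nonsing_inv _ hLQLdet
  have hLA : L * A = 0 := by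
    rw [hA, Matrix.mul_sub]
    have : L * (Q * Lᵀ * (L * Q * Lᵀ)⁻¹ * L * Q) = L * Q := by
      calc L * (Q * Lᵀ * (L * Q * Lᵀ)⁻¹ * L * Q)
          = (L * Q * Lᵀ * (L * Q * Lᵀ)⁻¹) * (L * Q) := by
            simp only [Matrix.mul_assoc]
        _ = L * Q := by rw [hinv, Matrix.one_mul]
    rw [this, sub_self]
  -- Q is symmetric
  have hQsymm : Qᵀ = Q := by
    rw [hQ, Matrix.transpose_sub, Matrix.transpose_smul, hSinvT]
    congr 1
    ext i j
    simp [vecMulVec, hvu, mul_comm]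
  -- Pᵀ = R * L * Q
  have hPT : Pᵀ = R * L * Q := by
    rw [hP, Matrix.transpose_mul, Matrix.transpose_mul, hRsymm, Matrix.transpose_transpose,
      hQsymm, Matrix.mul_assoc]
  constructor
  · rw [hA, Matrix.vecMul_sub, hoQ]
    have : (Q * Lᵀ * (L * Q * Lᵀ)⁻¹ * L * Q).vecMul o = 0 := by
      rw [show Q * Lᵀ * (L * Q * Lᵀ)⁻¹ * L * Q = Q * (Lᵀ * (L * Q * Lᵀ)⁻¹ * L * Q) by
        simp only [Matrix.mul_assoc], ← Matrix.vecMul_vecMul, hoQ, Matrix.zero_vecMul]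
    rw [this, sub_zero]
  · rw [hPT]
    have hQSA : Q * (S * A) = A := by
      rw [hA, Matrix.mul_sub, Matrix.mul_sub]
      have h1 : Q * (S * Q) = Q := by rw [← Matrix.mul_assoc, hQSQ]
      have h2 : Q * (S * (Q * Lᵀ * (L * Q * Lᵀ)⁻¹ * L * Q))
          = Q * Lᵀ * (L * Q * Lᵀ)⁻¹ * L * Q := by
        calc Q * (S * (Q * Lᵀ * (L * Q * Lᵀ)⁻¹ * L * Q))
            = (Q * S * Q) * (Lᵀ * (L * Q * Lᵀ)⁻¹ * L * Q) := by
              simp only [Matrix.mul_assoc]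
          _ = _ := by rw [hQSQ]; simp only [Matrix.mul_assoc]
      rw [h1, h2]
    calc R * L * Q * S * A = R * (L * (Q * (S * A))) := by simp only [Matrix.mul_assoc]
      _ = R * (L * A) := by rw [hQSA]
      _ = 0 := by rw [hLA, Matrix.mul_zero]
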